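/- Suppose a rank-k truncated LU factorization satisfies the spectrum-revealing pivoting condition: the leading (k+1)×(k+1) block Ā₁₁ of the partially factored matrix is invertible, ‖Ā₁₁⁻¹‖_max ≤ f/|α|, and every entry of the Schur complement S has absolute value at most |α|. Then ‖Π₁AΠ₂ᵀ − L̂Û‖₂ ≤ √(mn)·f·(k+1)·σ_{k+1}(A). -/

import Mathlib

open Matrix
noncomputable def specNorm {m n : Type*} [Fintype m] [Fintype n] [DecidableEq n]
    (A : Matrix m n ℝ) : ℝ :=
  ‖LinearMap.toContinuousLinearMap (Matrix.toEuclideanLin A)‖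

noncomputable def frobNorm {m n : Type*} [Fintype m] [Fintype n]
    (A : Matrix m n ℝ) : ℝ :=
  Real.sqrt (∑ i, ∑ j, (A i j) ^ 2)

/-- The `j`-th largest singular value of `A` (1-indexed), characterized as the
distance in spectral norm from `A` to the set of matrices of rank `< j`. -/
noncomputable def sval {m n : Type*} [Fintype m] [Fintype n] [DecidableEq n]
    (A : Matrix m n ℝ) (j : ℕ) : ℝ :=
  sInf { c | ∃ B : Matrix m n ℝ, B.rank < j ∧ specNorm (A - B) = c }

/-! The error `Π₁AΠ₂ᵀ - L̂Û` is the zero-padded Schur complement, whose entries are bounded by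
`|α|`, so its spectral norm is at most `√(mn) |α|`. Conversely, subtracting a matrix of rank `≤ k`
from `Π₁AΠ₂ᵀ` makes its `(k+1) × (k+1)` submatrix `Ā₁₁` singular, which costs at least
`σ_min(Ā₁₁) = 1 / ‖Ā₁₁⁻¹‖₂ ≥ |α| / ((k+1) f)` in spectral norm, the last bound because the entries
of `Ā₁₁⁻¹` are at most `f / |α|`. Hence `σ_{k+1}(A) ≥ |α| / ((k+1) f)`. -/

open scoped Matrix.Norms.L2Operator

theorem specNorm_eq_l2_opNorm {m n : Type*} [Fintype m] [Fintype n] [DecidableEq n]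
    (A : Matrix m n ℝ) : specNorm A = ‖A‖ := rfl

namespace Matrix

variable {𝕜 l m n o : Type*} [RCLike 𝕜] [Fintype l] [Fintype m] [Fintype n] [Fintype o]

theorem norm_dotProduct_sq_le {a : n → 𝕜} {c : ℝ} (h : ∀ j, ‖a j‖ ≤ c)
    (x : EuclideanSpace 𝕜 n) : ‖a ⬝ᵥ x‖ ^ 2 ≤ Fintype.card n * c ^ 2 * ‖x‖ ^ 2 := by
  have htri : ‖a ⬝ᵥ x‖ ≤ c * ∑ j, ‖x j‖ := by
    rw [Finset.mul_sum]
    refine (norm_sum_le _ _).trans (Finset.sum_le_sum fun j _ => ?_)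
    rw [norm_mul]
    exact mul_le_mul_of_nonneg_right (h j) (norm_nonneg _)
  calc ‖a ⬝ᵥ x‖ ^ 2 ≤ c ^ 2 * (∑ j, ‖x j‖) ^ 2 := by
        rw [← mul_pow]; exact pow_le_pow_left₀ (norm_nonneg _) htri 2
    _ ≤ c ^ 2 * (Fintype.card n * ∑ j, ‖x j‖ ^ 2) :=
        mul_le_mul_of_nonneg_left (sq_sum_le_card_mul_sum_sq ..) (sq_nonneg c)
    _ = Fintype.card n * c ^ 2 * ‖x‖ ^ 2 := by
        rw [EuclideanSpace.norm_sq_eq]; ring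

theorem l2_opNorm_le_of_norm_le [DecidableEq n] (A : Matrix m n 𝕜) {c : ℝ} (hc : 0 ≤ c)
    (h : ∀ i j, ‖A i j‖ ≤ c) : ‖A‖ ≤ √(Fintype.card m * Fintype.card n : ℕ) * c := by
  refine ContinuousLinearMap.opNorm_le_bound _ (by positivity) fun x => ?_
  refine (sq_le_sq₀ (norm_nonneg _) (by positivity)).mp ?_
  calc ‖(toEuclideanLin.trans LinearMap.toContinuousLinearMap) A x‖ ^ 2
      = ∑ i, ‖(A *ᵥ x) i‖ ^ 2 := EuclideanSpace.norm_sq_eq _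
    _ ≤ ∑ _i : m, Fintype.card n * c ^ 2 * ‖x‖ ^ 2 :=
        Finset.sum_le_sum fun i _ => norm_dotProduct_sq_le (h i) x
    _ = (√(Fintype.card m * Fintype.card n : ℕ) * c * ‖x‖) ^ 2 := by
        rw [mul_pow, mul_pow, Real.sq_sqrt (by positivity)]
        simp only [Finset.sum_const, Finset.card_univ, nsmul_eq_mul, Nat.cast_mul]
        ring

theorem l2_opNorm_one_submatrix_le_one [DecidableEq m] {f : l → m}
    (hf : Function.Injective f) : ‖(1 : Matrix m m 𝕜).submatrix f id‖ ≤ 1 := by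
  refine ContinuousLinearMap.opNorm_le_bound _ zero_le_one fun x => ?_
  refine (sq_le_sq₀ (norm_nonneg _) (by positivity)).mp ?_
  calc ‖(toEuclideanLin.trans LinearMap.toContinuousLinearMap)
          ((1 : Matrix m m 𝕜).submatrix f id) x‖ ^ 2
      = ∑ i, ‖x (f i)‖ ^ 2 := by
        rw [EuclideanSpace.norm_sq_eq]
        simp [mulVec, dotProduct, one_apply]
    _ = ∑ j ∈ Finset.univ.image f, ‖x j‖ ^ 2 :=
        (Finset.sum_image (f := fun j => ‖x j‖ ^ 2) fun _ _ _ _ h => hf h).symm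
    _ ≤ ∑ j, ‖x j‖ ^ 2 := Finset.sum_le_univ_sum_of_nonneg fun _ => sq_nonneg _
    _ = (1 * ‖x‖) ^ 2 := by rw [one_mul, EuclideanSpace.norm_sq_eq]

theorem l2_opNorm_submatrix_le [DecidableEq m] [DecidableEq n] [DecidableEq o]
    (A : Matrix m n 𝕜) {f : l → m} {g : o → n} (hf : Function.Injective f)
    (hg : Function.Injective g) : ‖A.submatrix f g‖ ≤ ‖A‖ := by
  have hfactor : A.submatrix f g
      = (1 : Matrix m m 𝕜).submatrix f id * A * ((1 : Matrix n n 𝕜).submatrix g id)ᴴ := by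
    ext i j
    simp [mul_apply, one_apply]
  calc ‖A.submatrix f g‖
      ≤ ‖(1 : Matrix m m 𝕜).submatrix f id‖ * ‖A‖ * ‖((1 : Matrix n n 𝕜).submatrix g id)ᴴ‖ := by
        rw [hfactor]
        exact (l2_opNorm_mul _ _).trans
          (mul_le_mul_of_nonneg_right (l2_opNorm_mul _ _) (norm_nonneg _))
    _ ≤ 1 * ‖A‖ * 1 := by
        rw [l2_opNorm_conjTranspose]
        gcongr
        · exact l2_opNorm_one_submatrix_le_one hf
        · exact l2_opNorm_one_submatrix_le_one hg
    _ = ‖A‖ := by ring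

theorem det_eq_zero_of_rank_lt {K : Type*} [Field K] [DecidableEq n] {A : Matrix n n K}
    (h : A.rank < Fintype.card n) : A.det = 0 := by
  by_contra hdet
  have := A.rank_of_isUnit ((isUnit_iff_isUnit_det A).mpr (isUnit_iff_ne_zero.mpr hdet))
  omega

theorem one_le_norm_inv_mul_norm_sub [DecidableEq n] {M N : Matrix n n 𝕜} (hM : IsUnit M.det)
    (hN : N.det = 0) : 1 ≤ ‖M⁻¹‖ * ‖M - N‖ := by
  -- otherwise the Neumann series inverts `1 - M⁻¹ (M - N) = M⁻¹ N`
  by_contra! h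
  have hu : IsUnit (1 - M⁻¹ * (M - N)) :=
    (Units.oneSub _ ((norm_mul_le _ _).trans_lt h)).isUnit
  rw [mul_sub, nonsing_inv_mul _ hM, sub_sub_cancel, isUnit_iff_isUnit_det, det_mul, hN,
    mul_zero] at hu
  exact not_isUnit_zero hu

end Matrix

theorem inv_le_sval_of_norm_inv_submatrix_le {ι m n : Type*} [Fintype ι] [Nonempty ι]
    [DecidableEq ι] [Fintype m] [Fintype n] [DecidableEq m] [DecidableEq n]
    (A : Matrix m n ℝ) {f : ι → m} {g : ι → n} (hf : Function.Injective f)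
    (hg : Function.Injective g) (hdet : IsUnit (A.submatrix f g).det) {c : ℝ}
    (hc : ‖(A.submatrix f g)⁻¹‖ ≤ c) : c⁻¹ ≤ sval A (Fintype.card ι) := by
  refine le_csInf ⟨specNorm (A - 0), 0, by simp [Fintype.card_pos], rfl⟩ ?_
  rintro _ ⟨B, hB, rfl⟩
  have hsing : (B.submatrix f g).det = 0 :=
    det_eq_zero_of_rank_lt ((rank_submatrix_le B f g).trans_lt hB)
  have key : 1 ≤ c * specNorm (A - B) := calc
    1 ≤ ‖(A.submatrix f g)⁻¹‖ * ‖A.submatrix f g - B.submatrix f g‖ :=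
        one_le_norm_inv_mul_norm_sub hdet hsing
    _ ≤ c * specNorm (A - B) :=
        mul_le_mul hc (l2_opNorm_submatrix_le (A - B) hf hg) (norm_nonneg _)
          ((norm_nonneg _).trans hc)
  have hcpos : 0 < c := pos_of_mul_pos_left (one_pos.trans_le key) (norm_nonneg _)
  exact (inv_le_iff_one_le_mul₀' hcpos).mpr key

theorem srlu_spectral_error_bound_general {k m' n' : ℕ} (hm : 0 < m') (hn : 0 < n')
    (PA : Matrix (Fin k ⊕ Fin m') (Fin k ⊕ Fin n') ℝ)
    (Lhat : Matrix (Fin k ⊕ Fin m') (Fin k) ℝ)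
    (Uhat : Matrix (Fin k) (Fin k ⊕ Fin n') ℝ)
    (S : Matrix (Fin m') (Fin n') ℝ)
    (hPA : PA = Lhat * Uhat + fromBlocks 0 0 0 S)
    (Abar : Matrix (Fin k ⊕ Fin 1) (Fin k ⊕ Fin 1) ℝ)
    (hAbar : Abar = PA.submatrix (Sum.map id fun _ => (⟨0, hm⟩ : Fin m'))
      (Sum.map id fun _ => (⟨0, hn⟩ : Fin n')))
    (f α : ℝ) (hf : 1 < f)
    (hα0 : α ≠ 0)
    (hdet : IsUnit Abar.det)
    (hmax : ∀ i j, |Abar⁻¹ i j| ≤ f / |α|)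
    (hpivot : ∀ i j, |S i j| ≤ |α|) :
    specNorm (PA - Lhat * Uhat) ≤
      Real.sqrt (((k + m') * (k + n') : ℕ)) * f * (k + 1) * sval PA (k + 1) := by
  have hαpos : 0 < |α| := abs_pos.mpr hα0
  have hfpos : 0 < f := one_pos.trans hf
  have herr : specNorm (PA - Lhat * Uhat) ≤ √((k + m') * (k + n') : ℕ) * |α| := by
    rw [hPA, add_sub_cancel_left, specNorm_eq_l2_opNorm]
    simpa using (fromBlocks (0 : Matrix (Fin k) (Fin k) ℝ) 0 0 S).l2_opNorm_le_of_norm_le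
      (abs_nonneg α) (by rintro (i | i) (j | j) <;> simp [hpivot])
  have hinv : ‖Abar⁻¹‖ ≤ (k + 1) * (f / |α|) := by
    simpa [← sq, Real.sqrt_sq (by positivity : (0 : ℝ) ≤ k + 1)] using
      Abar⁻¹.l2_opNorm_le_of_norm_le (by positivity) hmax
  have hsval : ((k + 1) * (f / |α|))⁻¹ ≤ sval PA (k + 1) := by
    subst hAbar
    simpa using inv_le_sval_of_norm_inv_submatrix_le PA
      (Function.injective_id.sumMap (Function.injective_of_subsingleton _))
      (Function.injective_id.sumMap (Function.injective_of_subsingleton _)) hdet hinv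
  calc specNorm (PA - Lhat * Uhat) ≤ √((k + m') * (k + n') : ℕ) * |α| := herr
    _ = √((k + m') * (k + n') : ℕ) * f * (k + 1) * ((k + 1) * (f / |α|))⁻¹ := by
        field_simp
    _ ≤ √((k + m') * (k + n') : ℕ) * f * (k + 1) * sval PA (k + 1) := by gcongr

/-- under the spectrum-revealing pivoting condition,
‖Π₁AΠ₂ᵀ − L̂Û‖₂ ≤ √(mn)·f·(k+1)·σ_{k+1}(A).  Here Ā₁₁ is the leading
(k+1)×(k+1) block of the partially factored matrix (a submatrix of Π₁AΠ₂ᵀ),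
α is the (1,1) pivot candidate of the Schur complement S, every entry of S
is bounded by |α| in magnitude, and ‖Ā₁₁⁻¹‖_max ≤ f/|α|. -/
theorem srlu_spectral_error_bound {k m' n' : ℕ} (hm : 0 < m') (hn : 0 < n')
    (PA : Matrix (Fin k ⊕ Fin m') (Fin k ⊕ Fin n') ℝ)
    (Lhat : Matrix (Fin k ⊕ Fin m') (Fin k) ℝ)
    (Uhat : Matrix (Fin k) (Fin k ⊕ Fin n') ℝ)
    (S : Matrix (Fin m') (Fin n') ℝ)
    (hPA : PA = Lhat * Uhat + fromBlocks 0 0 0 S)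
    (Abar : Matrix (Fin k ⊕ Fin 1) (Fin k ⊕ Fin 1) ℝ)
    (hAbar : Abar = PA.submatrix (Sum.map id fun _ => (⟨0, hm⟩ : Fin m'))
      (Sum.map id fun _ => (⟨0, hn⟩ : Fin n')))
    (f α : ℝ) (hf : 1 < f)
    (hα : α = S ⟨0, hm⟩ ⟨0, hn⟩) (hα0 : α ≠ 0)
    (hdet : IsUnit Abar.det)
    (hmax : ∀ i j, |Abar⁻¹ i j| ≤ f / |α|)
    (hpivot : ∀ i j, |S i j| ≤ |α|) :
    specNorm (PA - Lhat * Uhat) ≤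
      Real.sqrt (((k + m') * (k + n') : ℕ)) * f * (k + 1) * sval PA (k + 1) :=
  srlu_spectral_error_bound_general hm hn PA Lhat Uhat S hPA Abar hAbar f α hf hα0 hdet hmax hpivot
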